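/- arXiv:2008.09086 — 5 statements merged into one kernel-verified Lean document; each statement's English description precedes it below -/
import Mathlib

section
/- For every positive integer n, the map sending a tandem walk W ∈ 𝒲_n to the permutation CP(WC(W)) is a bijection from 𝒲_n onto the set of Baxter permutations of size n. -/
/-- The step set `A = {(1,-1)} ∪ {(-i,j) : i,j ≥ 0}`. -/
def stepSet : Set (ℤ × ℤ) := {d | d = (1, -1) ∨ (d.1 ≤ 0 ∧ 0 ≤ d.2)}

/-- One step of the coalescent walk: given the walk increment `d ∈ A` and the current
value `z` of a trajectory, the next value of the trajectory. -/
def zstep (d : ℤ × ℤ) (z : ℤ) : ℤ :=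
  if d = (1, -1) then z - 1
  else if 0 ≤ z then z + d.2
  else if z < d.1 then z - d.1
  else d.2

/-- The coalescent-walk process `WC(W)` driven by the walk `W` (time-indexed by `ℕ`, the
relevant indices being `1,…,n`): `wc W t s` is the value `Z^{(t)}_s` of the trajectory started
at time `t`, evaluated at time `s ≥ t`. -/
def wc (W : ℕ → ℤ × ℤ) (t : ℕ) : ℕ → ℤ
  | 0 => 0
  | s + 1 => if s + 1 ≤ t then 0 else zstep (W (s + 1) - W s) (wc W t s)

/-- The relation `≤_Z` associated with a coalescent-walk process `Z`:
`i ≤_Z i`; for `i < j`, `i ≤_Z j` if `Z^{(i)}_j < 0` and `j ≤_Z i` if `Z^{(i)}_j ≥ 0`. -/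
def leZ (Z : ℕ → ℕ → ℤ) (i j : ℕ) : Prop :=
  i = j ∨ (i < j ∧ Z i j < 0) ∨ (j < i ∧ 0 ≤ Z j i)

/-- `(W_1, …, W_n)` is a tandem walk of size `n`: it stays in the non-negative quadrant, has
increments in `A`, starts on the `y`-axis and ends on the `x`-axis. -/
def isTandem (n : ℕ) (W : ℕ → ℤ × ℤ) : Prop :=
  (∀ t, 1 ≤ t → t ≤ n → 0 ≤ (W t).1 ∧ 0 ≤ (W t).2) ∧
  (∀ t, 1 ≤ t → t + 1 ≤ n → W (t + 1) - W t ∈ stepSet) ∧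
  (W 1).1 = 0 ∧ (W n).2 = 0

/-- The set `𝒲_n` of tandem walks of size `n`, normalized to vanish outside `{1,…,n}`. -/
def tandemSet (n : ℕ) : Set (ℕ → ℤ × ℤ) :=
  {W | (∀ t, t ∉ Set.Icc 1 n → W t = 0) ∧ isTandem n W}

/-- `σ` is a permutation of `{1,…,n}`. -/
def isPermOn (n : ℕ) (σ : ℕ → ℕ) : Prop :=
  Set.BijOn σ (Set.Icc 1 n) (Set.Icc 1 n)

/-- `σ = CP(Z)`: `σ` is the unique permutation of `{1,…,n}` such that
`σ(i) ≤ σ(j) ↔ i ≤_Z j`. -/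
def isCP (n : ℕ) (Z : ℕ → ℕ → ℤ) (σ : ℕ → ℕ) : Prop :=
  isPermOn n σ ∧
  ∀ i ∈ Set.Icc 1 n, ∀ j ∈ Set.Icc 1 n, (σ i ≤ σ j ↔ leZ Z i j)

/-- `σ` is a Baxter permutation (of size `n`): there are no indices `1 ≤ i < j < k ≤ n` with
`σ(j+1) < σ(i) < σ(k) < σ(j)` or `σ(j) < σ(k) < σ(i) < σ(j+1)`. -/
def isBaxter (n : ℕ) (σ : ℕ → ℕ) : Prop :=
  ¬ ∃ i j k, 1 ≤ i ∧ i < j ∧ j < k ∧ k ≤ n ∧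
      ((σ (j + 1) < σ i ∧ σ i < σ k ∧ σ k < σ j) ∨
       (σ j < σ k ∧ σ k < σ i ∧ σ i < σ (j + 1)))

/-- The set of Baxter permutations of size `n` (normalized to vanish outside `{1,…,n}`). -/
def baxterSet (n : ℕ) : Set (ℕ → ℕ) :=
  {σ | (∀ t, t ∉ Set.Icc 1 n → σ t = 0) ∧ isPermOn n σ ∧ isBaxter n σ}

-- basics
lemma wc_zero (W : ℕ → ℤ × ℤ) (t s : ℕ) (h : s ≤ t) : wc W t s = 0 := by
  cases s with
  | zero => rfl
  | succ m => simp only [wc, if_pos h]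

lemma wc_succ (W : ℕ → ℤ × ℤ) (t s : ℕ) (h : t ≤ s) :
    wc W t (s + 1) = zstep (W (s + 1) - W s) (wc W t s) := by
  simp only [wc, if_neg (by omega : ¬ s + 1 ≤ t)]

lemma zstep_asc (z : ℤ) : zstep (1, -1) z = z - 1 := by simp [zstep]

lemma zstep_desc_nonneg {d : ℤ × ℤ} (hd : d ≠ (1, -1)) {z : ℤ} (hz : 0 ≤ z) :
    zstep d z = z + d.2 := by simp [zstep, if_neg hd, if_pos hz]

lemma zstep_desc_low {d : ℤ × ℤ} (hd : d ≠ (1, -1)) {z : ℤ} (hz : z < d.1) (hd1 : d.1 ≤ 0) :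
    zstep d z = z - d.1 := by
  simp only [zstep, if_neg hd, if_neg (by omega : ¬ (0:ℤ) ≤ z), if_pos hz]

lemma zstep_desc_cross {d : ℤ × ℤ} (hd : d ≠ (1, -1)) {z : ℤ} (hz : d.1 ≤ z) (hz2 : z < 0) :
    zstep d z = d.2 := by
  simp only [zstep, if_neg hd, if_neg (by omega : ¬ (0:ℤ) ≤ z), if_neg (by omega : ¬ z < d.1)]

lemma zstep_mono {d : ℤ × ℤ} (hd : d ∈ stepSet) {z z' : ℤ} (h : z ≤ z') :
    zstep d z ≤ zstep d z' := by
  rcases hd with hd | ⟨h1, h2⟩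
  · subst hd; rw [zstep_asc, zstep_asc]; omega
  · by_cases he : d = (1, -1)
    · subst he; rw [zstep_asc, zstep_asc]; omega
    · rcases le_or_gt 0 z with hz | hz
      · rw [zstep_desc_nonneg he hz, zstep_desc_nonneg he (le_trans hz h)]; omega
      · rcases le_or_gt 0 z' with hz' | hz'
        · rw [zstep_desc_nonneg he hz']
          rcases lt_or_ge z d.1 with hc | hc
          · rw [zstep_desc_low he hc h1]; omega
          · rw [zstep_desc_cross he hc hz]; omega
        · rcases lt_or_ge z d.1 with hc | hc
          · rw [zstep_desc_low he hc h1]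
            rcases lt_or_ge z' d.1 with hc' | hc'
            · rw [zstep_desc_low he hc' h1]; omega
            · rw [zstep_desc_cross he hc' hz']; omega
          · rw [zstep_desc_cross he hc hz, zstep_desc_cross he (le_trans hc h) hz']

lemma zstep_nonneg_of_nonneg {d : ℤ × ℤ} (hd : d ∈ stepSet) (he : d ≠ (1,-1)) {z : ℤ}
    (hz : 0 ≤ z) : 0 ≤ zstep d z := by
  rcases hd with hd | ⟨h1, h2⟩
  · exact absurd hd he
  · rw [zstep_desc_nonneg he hz]; omega

lemma wc_congr (W W' : ℕ → ℤ × ℤ) (t s : ℕ) (h : ∀ u, u ≤ s → W u = W' u) :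
    wc W t s = wc W' t s := by
  induction s with
  | zero => rfl
  | succ m ih =>
    simp only [wc]
    rw [ih (fun u hu => h u (by omega)), h (m+1) le_rfl, h m (by omega)]

lemma wc_eq_prop (W : ℕ → ℤ × ℤ) (t t' s : ℕ) (ht : t ≤ s) (ht' : t' ≤ s)
    (h : wc W t s = wc W t' s) : ∀ r, s ≤ r → wc W t r = wc W t' r := by
  intro r hr
  induction r with
  | zero => rw [wc_zero W t 0 (by omega), wc_zero W t' 0 (by omega)]
  | succ m ih =>
    rcases Nat.lt_or_ge s (m+1) with hlt | hge
    · have hm : s ≤ m := by omega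
      rw [wc_succ W t m (by omega), wc_succ W t' m (by omega), ih hm]
    · have : s = m + 1 := by omega
      subst this; exact h

-- monotone coupling: two trajectories compared from a common time
lemma wc_le_prop (W : ℕ → ℤ × ℤ) (t t' s : ℕ) (ht : t ≤ s) (ht' : t' ≤ s)
    (h : wc W t s ≤ wc W t' s)
    (r : ℕ) (hr : s ≤ r)
    (hsteps : ∀ u, s ≤ u → u < r → W (u+1) - W u ∈ stepSet) :
    wc W t r ≤ wc W t' r := by
  induction r with
  | zero => have : s = 0 := by omega
            subst this; exact h
  | succ m ih =>
    rcases Nat.lt_or_ge s (m+1) with hlt | hge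
    · have hm : s ≤ m := by omega
      rw [wc_succ W t m (by omega), wc_succ W t' m (by omega)]
      exact zstep_mono (hsteps m hm (by omega))
        (ih hm (fun u hu hu2 => hsteps u hu (by omega)))
    · have : s = m + 1 := by omega
      subst this; exact h

def freeW (n : ℕ) (W : ℕ → ℤ × ℤ) : Prop :=
  (∀ t, t ∉ Set.Icc 1 n → W t = 0) ∧
  (∀ t, 1 ≤ t → t ≤ n → 0 ≤ (W t).1 ∧ 0 ≤ (W t).2) ∧
  (∀ t, 1 ≤ t → t + 1 ≤ n → W (t + 1) - W t ∈ stepSet) ∧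
  (W 1).1 = 0

lemma step_cases {n : ℕ} {W : ℕ → ℤ × ℤ} (hW : freeW n W) {u : ℕ} (h1 : 1 ≤ u)
    (h2 : u + 1 ≤ n) :
    W (u+1) - W u = (1, -1) ∨
    (W (u+1) - W u ≠ (1, -1) ∧ (W (u+1) - W u).1 ≤ 0 ∧ 0 ≤ (W (u+1) - W u).2) := by
  rcases hW.2.2.1 u h1 h2 with h | h
  · exact Or.inl h
  · by_cases he : W (u+1) - W u = (1, -1)
    · exact Or.inl he
    · exact Or.inr ⟨he, h⟩

lemma coord_step (W : ℕ → ℤ × ℤ) (u : ℕ) :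
    (W (u+1)).1 = (W u).1 + (W (u+1) - W u).1 ∧
    (W (u+1)).2 = (W u).2 + (W (u+1) - W u).2 := by
  constructor <;> simp [Prod.fst_sub, Prod.snd_sub]


lemma asc_coord {W : ℕ → ℤ × ℤ} {u : ℕ} (h : W (u+1) - W u = (1,-1)) :
    (W (u+1)).1 = (W u).1 + 1 ∧ (W (u+1)).2 = (W u).2 - 1 := by
  have h1 := congrArg Prod.fst h
  have h2 := congrArg Prod.snd h
  simp [Prod.fst_sub, Prod.snd_sub] at h1 h2
  omega

/-- bounds: negative trajectories are ≥ -X, nonnegative ones are ≤ Y. -/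
lemma wc_bounds {n : ℕ} {W : ℕ → ℤ × ℤ} (hW : freeW n W) {v s : ℕ}
    (hv : 1 ≤ v) (hvs : v ≤ s) (hs : s ≤ n) :
    (wc W v s < 0 → -(W s).1 ≤ wc W v s) ∧ (0 ≤ wc W v s → wc W v s ≤ (W s).2) := by
  induction s with
  | zero => omega
  | succ m ih =>
    rcases Nat.lt_or_ge m v with hlt | hge
    · -- v = m + 1
      have hv' : v = m + 1 := by omega
      rw [hv', wc_zero W (m+1) (m+1) le_rfl]
      exact ⟨by omega, fun _ => (hW.2.1 (m+1) (by omega) hs).2⟩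
    · have ihm := ih hge (by omega)
      have hst := step_cases hW (u := m) (by omega) (by omega)
      have hq := hW.2.1 m (by omega) (by omega)
      have hq' := hW.2.1 (m+1) (by omega) hs
      rw [wc_succ W v m hge]
      set z := wc W v m with hz
      rcases hst with hd | ⟨hne, hd1, hd2⟩
      · obtain ⟨hcoX, hcoY⟩ := asc_coord hd
        rw [hd, zstep_asc]
        constructor
        · intro h
          rcases lt_or_ge z 0 with h0 | h0
          · have := ihm.1 h0; omega
          · omega
        · intro h
          have := ihm.2 (by omega); omega
      · obtain ⟨hcoX, hcoY⟩ := coord_step W m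
        set d := W (m+1) - W m with hdd
        rcases le_or_gt 0 z with h0 | h0
        · rw [zstep_desc_nonneg hne h0]
          have := ihm.2 h0
          constructor
          · omega
          · intro _; omega
        · rcases lt_or_ge z d.1 with hc | hc
          · rw [zstep_desc_low hne hc hd1]
            have := ihm.1 h0
            constructor
            · intro _; omega
            · omega
          · rw [zstep_desc_cross hne hc h0]
            constructor
            · omega
            · intro _; omega

/-- P1: every value in [-X_s, -1] is attained. -/
lemma values_attained {n : ℕ} {W : ℕ → ℤ × ℤ} (hW : freeW n W) :
    ∀ s, 1 ≤ s → s ≤ n → ∀ k : ℤ, 1 ≤ k → k ≤ (W s).1 →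
    ∃ v, 1 ≤ v ∧ v ≤ s ∧ wc W v s = -k := by
  intro s
  induction s with
  | zero => omega
  | succ m ih =>
    intro _ hs k hk1 hk2
    rcases Nat.eq_zero_or_pos m with hm | hm
    · subst hm
      have hx1 : (W (0+1)).1 = 0 := hW.2.2.2
      omega
    · have hst := step_cases hW hm (by omega)
      rcases hst with hd | ⟨hne, hd1, hd2⟩
      · obtain ⟨hcoX, hcoY⟩ := asc_coord hd
        rcases eq_or_lt_of_le hk1 with hk | hk
        · refine ⟨m, hm, by omega, ?_⟩
          rw [wc_succ W m m le_rfl, hd, zstep_asc, wc_zero W m m le_rfl]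
          omega
        · obtain ⟨v, hv1, hv2, hv3⟩ := ih hm (by omega) (k-1) (by omega) (by omega)
          refine ⟨v, hv1, by omega, ?_⟩
          rw [wc_succ W v m hv2, hd, zstep_asc, hv3]
          ring
      · obtain ⟨hcoX, hcoY⟩ := coord_step W m
        set d := W (m+1) - W m with hdd
        obtain ⟨v, hv1, hv2, hv3⟩ := ih hm (by omega) (k - d.1) (by omega) (by omega)
        refine ⟨v, hv1, by omega, ?_⟩
        rw [wc_succ W v m hv2, zstep_desc_low hne (by omega) hd1, hv3]
        ring

/-- NS: equal negative values must have become jointly zero at an ascent. -/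
lemma joint_zero {n : ℕ} {W : ℕ → ℤ × ℤ} (hW : freeW n W) :
    ∀ s, s ≤ n → ∀ v x, 1 ≤ v → 1 ≤ x → v ≤ s → x ≤ s →
    wc W v s = wc W x s → wc W v s < 0 →
    ∃ u, v ≤ u ∧ x ≤ u ∧ u + 1 ≤ s ∧ W (u+1) - W u = (1,-1) ∧
      wc W v u = 0 ∧ wc W x u = 0 := by
  intro s
  induction s with
  | zero => omega
  | succ m ih =>
    intro hs v x hv hx hvs hxs heq hneg
    have hvm : v ≤ m := by
      by_contra h
      have : v = m + 1 := by omega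
      rw [this, wc_zero W (m+1) (m+1) le_rfl] at hneg; omega
    have hxm : x ≤ m := by
      by_contra h
      have : x = m + 1 := by omega
      rw [this, wc_zero W (m+1) (m+1) le_rfl] at heq; omega
    have hst := step_cases hW (u := m) (by omega) (by omega)
    rw [wc_succ W v m hvm, wc_succ W x m hxm] at heq
    rw [wc_succ W v m hvm] at hneg
    set zv := wc W v m with hzv
    set zx := wc W x m with hzx
    rcases hst with hd | ⟨hne, hd1, hd2⟩
    · rw [hd, zstep_asc, zstep_asc] at heq
      rw [hd, zstep_asc] at hneg
      have hzeq : zv = zx := by omega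
      rcases lt_or_ge zv 0 with h0 | h0
      · obtain ⟨u, h1, h2, h3, h4, h5, h6⟩ :=
          ih (by omega) v x hv hx hvm hxm (by omega) h0
        exact ⟨u, h1, h2, by omega, h4, h5, h6⟩
      · exact ⟨m, hvm, hxm, le_rfl, hd, by omega, by omega⟩
    · set d := W (m+1) - W m with hdd
      have hzvneg : zv < d.1 := by
        rcases le_or_gt 0 zv with h0 | h0
        · rw [zstep_desc_nonneg hne h0] at hneg; omega
        · rcases lt_or_ge zv d.1 with hc | hc
          · exact hc
          · rw [zstep_desc_cross hne hc h0] at hneg; omega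
      rw [zstep_desc_low hne hzvneg hd1] at heq hneg
      have hzxneg : zx < d.1 := by
        rcases le_or_gt 0 zx with h0 | h0
        · rw [zstep_desc_nonneg hne h0] at heq; omega
        · rcases lt_or_ge zx d.1 with hc | hc
          · exact hc
          · rw [zstep_desc_cross hne hc h0] at heq; omega
      rw [zstep_desc_low hne hzxneg hd1] at heq
      obtain ⟨u, h1, h2, h3, h4, h5, h6⟩ :=
        ih (by omega) v x hv hx hvm hxm (by omega) (by omega)
      exact ⟨u, h1, h2, by omega, h4, h5, h6⟩

def signOK (n : ℕ) (W : ℕ → ℤ × ℤ) (σ : ℕ → ℕ) : Prop :=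
  ∀ v t, 1 ≤ v → v < t → t ≤ n → (wc W v t < 0 ↔ σ v < σ t)

/-- value monotonicity with respect to σ. -/
lemma wc_mono_sigma {n : ℕ} {W : ℕ → ℤ × ℤ} {σ : ℕ → ℕ} (hW : freeW n W)
    (hsig : signOK n W σ) {v x s : ℕ} (hv : 1 ≤ v) (hx : 1 ≤ x)
    (hvs : v ≤ s) (hxs : x ≤ s) (hs : s ≤ n) (hlt : σ v < σ x) :
    wc W v s ≤ wc W x s := by
  have hsteps : ∀ u, 1 ≤ u → u < s → W (u+1) - W u ∈ stepSet :=
    fun u hu hu2 => hW.2.2.1 u hu (by omega)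
  rcases Nat.lt_trichotomy v x with h | h | h
  · have h1 : wc W v x < 0 := (hsig v x hv h (by omega)).2 hlt
    have h2 : wc W v x ≤ wc W x x := by rw [wc_zero W x x le_rfl]; omega
    exact wc_le_prop W v x x (by omega) le_rfl h2 s hxs
      (fun u hu hu2 => hsteps u (by omega) hu2)
  · subst h; omega
  · have h1 : ¬ wc W x v < 0 := by
      rw [hsig x v hx h (by omega)]; omega
    have h2 : wc W v v ≤ wc W x v := by rw [wc_zero W v v le_rfl]; omega
    exact wc_le_prop W v x v le_rfl (by omega) h2 s hvs
      (fun u hu hu2 => hsteps u (by omega) hu2)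

def datafit (n : ℕ) (W : ℕ → ℤ × ℤ) (σ : ℕ → ℕ) (μ : ℕ → ℤ) (h : ℤ) : Prop :=
  signOK n W σ ∧ (∀ v, 1 ≤ v → v ≤ n → σ n ≤ σ v → wc W v n = μ v) ∧ (W n).2 = h

def admiss (n : ℕ) (σ : ℕ → ℕ) (μ : ℕ → ℤ) (h : ℤ) : Prop :=
  Set.InjOn σ (Set.Icc 1 n) ∧ isBaxter n σ ∧ μ n = 0 ∧
  (∀ v, 1 ≤ v → v ≤ n → σ n ≤ σ v → 0 ≤ μ v ∧ μ v ≤ h) ∧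
  (∀ v w, 1 ≤ v → v ≤ n → 1 ≤ w → w ≤ n → σ n ≤ σ v → σ v ≤ σ w → μ v ≤ μ w) ∧
  (∀ u v, 1 ≤ v → v ≤ u → u + 1 ≤ n → σ n ≤ σ v → σ n ≤ σ u →
    ((σ (u+1) < σ v ∧ σ v < σ u) ∨ (σ u < σ v ∧ σ v < σ (u+1))) → μ v = μ u)

lemma sig_ne {N : ℕ} {σ : ℕ → ℕ} (hinj : Set.InjOn σ (Set.Icc 1 N)) {v w : ℕ}
    (hv1 : 1 ≤ v) (hv2 : v ≤ N) (hw1 : 1 ≤ w) (hw2 : w ≤ N) (hne : v ≠ w) :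
    σ v ≠ σ w := by
  intro h
  exact hne (hinj (Set.mem_Icc.mpr ⟨hv1, hv2⟩) (Set.mem_Icc.mpr ⟨hw1, hw2⟩) h)

lemma baxter_mono {n : ℕ} {σ : ℕ → ℕ} (h : isBaxter (n+1) σ) : isBaxter n σ := by
  intro ⟨i, j, k, h1, h2, h3, h4, h5⟩
  exact h ⟨i, j, k, h1, h2, h3, by omega, h5⟩

/-- transfer of admissibility under removing the last point, ascent case. -/
lemma admiss_asc {n : ℕ} {σ : ℕ → ℕ} {μ : ℕ → ℤ} {h : ℤ} (hn : 1 ≤ n)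
    (ha : admiss (n+1) σ μ h) (hasc : σ n < σ (n+1)) :
    admiss n σ (fun v => if σ (n+1) ≤ σ v then μ v + 1 else 0) (h + 1) := by
  obtain ⟨hinj, hbax, hmu0, hbd, hmono, hconst⟩ := ha
  have hh0 : 0 ≤ h := by
    have := hbd (n+1) (by omega) le_rfl le_rfl
    omega
  refine ⟨hinj.mono (by intro x hx; simp only [Set.mem_Icc] at *; omega),
    baxter_mono hbax, ?_, ?_, ?_, ?_⟩
  · simp only [if_neg (by omega : ¬ σ (n+1) ≤ σ n)]
  · intro v hv1 hv2 hv3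
    by_cases hc : σ (n+1) ≤ σ v
    · simp only [if_pos hc]
      have := hbd v hv1 (by omega) hc
      omega
    · simp only [if_neg hc]; omega
  · intro v w hv1 hv2 hw1 hw2 hv3 hvw
    by_cases hc : σ (n+1) ≤ σ v
    · simp only [if_pos hc, if_pos (le_trans hc hvw)]
      have := hmono v w hv1 (by omega) hw1 (by omega) hc hvw
      omega
    · simp only [if_neg hc]
      by_cases hc' : σ (n+1) ≤ σ w
      · simp only [if_pos hc']
        have := hbd w hw1 (by omega) hc'
        omega
      · simp only [if_neg hc']; omega
  · intro u v hv1 hv2 hu1 hv3 hu3 hbet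
    by_cases hcv : σ (n+1) ≤ σ v
    · by_cases hcu : σ (n+1) ≤ σ u
      · simp only [if_pos hcv, if_pos hcu]
        have := hconst u v hv1 hv2 (by omega) hcv hcu hbet
        omega
      · -- v above, u flip : Baxter pattern 2 with (v, u, n+1)
        exfalso
        have hnev : σ v ≠ σ (n+1) := sig_ne hinj hv1 (by omega) (by omega) le_rfl (by omega)
        have huv : σ u < σ v := by omega
        rcases hbet with ⟨hb1, hb2⟩ | ⟨hb1, hb2⟩
        · omega
        · have hvu : v ≠ u := by intro he; rw [he] at huv; omega
          exact hbax ⟨v, u, n+1, hv1, by omega, by omega, le_rfl,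
            Or.inr ⟨by omega, by omega, hb2⟩⟩
    · by_cases hcu : σ (n+1) ≤ σ u
      · -- v flip, u above : Baxter pattern 1 with (v, u, n+1)
        exfalso
        have hneu : σ u ≠ σ (n+1) := sig_ne hinj (by omega) (by omega) (by omega) le_rfl (by omega)
        rcases hbet with ⟨hb1, hb2⟩ | ⟨hb1, hb2⟩
        · have hvu : v ≠ u := by intro he; rw [he] at hcv; omega
          exact hbax ⟨v, u, n+1, hv1, by omega, by omega, le_rfl,
            Or.inl ⟨hb1, by omega, by omega⟩⟩
        · omega
      · simp only [if_neg hcv, if_neg hcu]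

/-- transfer of admissibility under removing the last point, descent case. -/
lemma admiss_desc {n : ℕ} {σ : ℕ → ℕ} {μ : ℕ → ℤ} {h : ℤ} (hn : 1 ≤ n)
    (ha : admiss (n+1) σ μ h) (hdesc : σ (n+1) < σ n) :
    admiss n σ (fun v => μ v - μ n) (h - μ n) := by
  obtain ⟨hinj, hbax, hmu0, hbd, hmono, hconst⟩ := ha
  have hbn := hbd n (by omega) (by omega) (by omega)
  refine ⟨hinj.mono (by intro x hx; simp only [Set.mem_Icc] at *; omega),
    baxter_mono hbax, by dsimp only; omega, ?_, ?_, ?_⟩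
  · intro v hv1 hv2 hv3
    dsimp only
    have h1 := hmono n v (by omega) (by omega) hv1 (by omega) (by omega) hv3
    have h2 := hbd v hv1 (by omega) (by omega)
    omega
  · intro v w hv1 hv2 hw1 hw2 hv3 hvw
    dsimp only
    have := hmono v w hv1 (by omega) hw1 (by omega) (by omega) hvw
    omega
  · intro u v hv1 hv2 hu1 hv3 hu3 hbet
    dsimp only
    have := hconst u v hv1 hv2 (by omega) (by omega) (by omega) hbet
    omega

lemma wc_ext {W' : ℕ → ℤ × ℤ} {n : ℕ} (P : ℤ × ℤ) (t s : ℕ) (hs : s ≤ n) :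
    wc (fun u => if u = n+1 then P else W' u) t s = wc W' t s :=
  wc_congr _ W' t s (fun u hu => by simp [show u ≠ n+1 by omega])

lemma prod_add_fst (a : ℤ × ℤ) (p q : ℤ) : (a + (p, q)).1 = a.1 + p := rfl
lemma prod_add_snd (a : ℤ × ℤ) (p q : ℤ) : (a + (p, q)).2 = a.2 + q := rfl

lemma exist_asc {n : ℕ} {σ : ℕ → ℕ} {μ : ℕ → ℤ} {h : ℤ} {W' : ℕ → ℤ × ℤ} (hn : 1 ≤ n)
    (hadm : admiss (n+1) σ μ h) (hasc : σ n < σ (n+1))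
    (hW' : freeW n W')
    (hfit : datafit n W' σ (fun v => if σ (n+1) ≤ σ v then μ v + 1 else 0) (h + 1)) :
    freeW (n+1) (fun u => if u = n+1 then W' n + (1, -1) else W' u) ∧
    datafit (n+1) (fun u => if u = n+1 then W' n + (1, -1) else W' u) σ μ h := by
  obtain ⟨hinj, hbax, hmu0, hbd, hmono, hconst⟩ := hadm
  have hh0 : 0 ≤ h := by have := hbd (n+1) (by omega) le_rfl le_rfl; omega
  set We : ℕ → ℤ × ℤ := fun u => if u = n+1 then W' n + (1, -1) else W' u with hWe
  have heq : ∀ u, u ≤ n → We u = W' u := fun u hu => by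
    simp [hWe, show u ≠ n+1 by omega]
  have hstep : We (n+1) - We n = (1, -1) := by
    rw [heq n le_rfl]
    simp [hWe]
  have hYn : (W' n).2 = h + 1 := hfit.2.2
  have hwcn : ∀ v, v ≤ n → wc We v (n+1) = wc W' v n - 1 := by
    intro v hv
    rw [wc_succ We v n hv, hstep, zstep_asc, wc_ext _ v n le_rfl]
  constructor
  · refine ⟨?_, ?_, ?_, ?_⟩
    · intro t ht
      simp only [Set.mem_Icc, not_and, not_le] at ht
      have h1 : t ≠ n + 1 := by omega
      simp only [hWe, if_neg h1]
      exact hW'.1 t (by simp only [Set.mem_Icc, not_and, not_le]; omega)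
    · intro t ht1 ht2
      rcases Nat.lt_or_ge t (n+1) with hlt | hge
      · rw [heq t (by omega)]
        exact hW'.2.1 t ht1 (by omega)
      · have : t = n + 1 := by omega
        subst this
        simp only [hWe, if_pos rfl]
        have := (hW'.2.1 n hn le_rfl).1
        constructor
        · rw [prod_add_fst]; omega
        · rw [prod_add_snd]; omega
    · intro t ht1 ht2
      rcases Nat.lt_or_ge (t+1) (n+1) with hlt | hge
      · rw [heq (t+1) (by omega), heq t (by omega)]
        exact hW'.2.2.1 t ht1 (by omega)
      · have : t = n := by omega
        subst this
        rw [hstep]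
        exact Or.inl rfl
    · rw [heq 1 hn]; exact hW'.2.2.2
  · refine ⟨?_, ?_, ?_⟩
    · intro v t hv1 hvt ht
      rcases Nat.lt_or_ge t (n+1) with hlt | hge
      · rw [wc_ext _ v t (by omega)]
        exact hfit.1 v t hv1 hvt (by omega)
      · have : t = n + 1 := by omega
        subst this
        rw [hwcn v (by omega)]
        rcases Nat.lt_or_ge v n with hvn | hvn
        · by_cases hc : σ v < σ n
          · have h1 : wc W' v n < 0 := (hfit.1 v n hv1 hvn le_rfl).2 hc
            constructor
            · intro _; omega
            · intro _; omega
          · have hne : σ v ≠ σ n := sig_ne hinj hv1 (by omega) (by omega) (by omega) (by omega)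
            have hgt : σ n < σ v := by omega
            have hval := hfit.2.1 v hv1 (by omega) (by omega)
            by_cases hc2 : σ (n+1) ≤ σ v
            · have hne2 : σ v ≠ σ (n+1) :=
                sig_ne hinj hv1 (by omega) (by omega) le_rfl (by omega)
              simp only [if_pos hc2] at hval
              have := (hbd v hv1 (by omega) hc2).1
              constructor
              · intro hh; omega
              · intro hh; omega
            · simp only [if_neg hc2] at hval
              constructor
              · intro _; omega
              · intro _; omega
        · have hv' : v = n := by omega
          rw [hv', wc_zero W' n n le_rfl]
          constructor
          · intro _; exact hasc
          · intro _; omega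
    · intro v hv1 hv2 hv3
      rcases Nat.lt_or_ge v (n+1) with hlt | hge
      · have hne2 : σ v ≠ σ (n+1) :=
          sig_ne hinj hv1 (by omega) (by omega) le_rfl (by omega)
        have hval := hfit.2.1 v hv1 (by omega) (by omega)
        simp only [if_pos (show σ (n+1) ≤ σ v by omega)] at hval
        rw [hwcn v (by omega), hval]
        ring
      · have : v = n + 1 := by omega
        subst this
        rw [wc_zero We (n+1) (n+1) le_rfl, hmu0]
    · simp only [hWe, if_pos rfl, prod_add_snd]
      omega

lemma uniq_asc {n : ℕ} {σ : ℕ → ℕ} {μ : ℕ → ℤ} {h : ℤ} {Wt : ℕ → ℤ × ℤ} (hn : 1 ≤ n)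
    (hadm : admiss (n+1) σ μ h) (hasc : σ n < σ (n+1))
    (hWt : freeW (n+1) Wt) (hfit : datafit (n+1) Wt σ μ h) :
    freeW n (fun t => if t = n+1 then 0 else Wt t) ∧
    datafit n (fun t => if t = n+1 then 0 else Wt t) σ
      (fun v => if σ (n + 1) ≤ σ v then μ v + 1 else 0) (h + 1) ∧
    Wt = fun u => if u = n+1 then Wt n + (1, -1) else Wt u := by
  obtain ⟨hinj, hbax, hmu0, hbd, hmono, hconst⟩ := hadm
  set T : ℕ → ℤ × ℤ := fun t => if t = n+1 then 0 else Wt t with hT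
  have heq : ∀ u, u ≤ n → T u = Wt u := fun u hu => by
    simp [hT, show u ≠ n+1 by omega]
  have hwcT : ∀ v s, s ≤ n → wc T v s = wc Wt v s :=
    fun v s hs => wc_congr T Wt v s (fun u hu => heq u (by omega))
  -- the last step must be an ascent step
  have hstep : Wt (n+1) - Wt n = (1, -1) := by
    rcases step_cases hWt (u := n) hn le_rfl with hd | ⟨hne, hd1, hd2⟩
    · exact hd
    · exfalso
      have h1 : wc Wt n (n+1) = (Wt (n+1) - Wt n).2 := by
        rw [wc_succ Wt n n le_rfl, wc_zero Wt n n le_rfl, zstep_desc_nonneg hne le_rfl]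
        ring
      have h2 : ¬ wc Wt n (n+1) < 0 := by omega
      rw [hfit.1 n (n+1) hn (by omega) le_rfl] at h2
      exact h2 hasc
  have hwcn : ∀ v, v ≤ n → wc Wt v (n+1) = wc Wt v n - 1 := by
    intro v hv
    rw [wc_succ Wt v n hv, hstep, zstep_asc]
  have hY : (Wt (n+1)).2 = (Wt n).2 - 1 := (asc_coord hstep).2
  refine ⟨⟨?_, ?_, ?_, ?_⟩, ⟨?_, ?_, ?_⟩, ?_⟩
  · intro t ht
    by_cases h1 : t = n+1
    · simp [hT, h1]
    · simp only [hT, if_neg h1]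
      exact hWt.1 t (by simp only [Set.mem_Icc, not_and, not_le] at *; omega)
  · intro t ht1 ht2
    rw [heq t (by omega)]
    exact hWt.2.1 t ht1 (by omega)
  · intro t ht1 ht2
    rw [heq (t+1) (by omega), heq t (by omega)]
    exact hWt.2.2.1 t ht1 (by omega)
  · rw [heq 1 hn]; exact hWt.2.2.2
  · intro v t hv1 hvt ht
    rw [hwcT v t ht]
    exact hfit.1 v t hv1 hvt (by omega)
  · intro v hv1 hv2 hv3
    rw [hwcT v n le_rfl]
    dsimp only
    rcases Nat.lt_or_ge v n with hvn | hvn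
    · have hgt : σ n < σ v := by
        have := sig_ne hinj hv1 (by omega) hn (by omega) (by omega)
        omega
      by_cases hc : σ (n+1) ≤ σ v
      · have hne2 : σ v ≠ σ (n+1) := sig_ne hinj hv1 (by omega) (by omega) le_rfl (by omega)
        rw [if_pos hc]
        have hval := hfit.2.1 v hv1 (by omega) hc
        have := hwcn v (by omega)
        omega
      · rw [if_neg hc]
        have h1 : wc Wt v (n+1) < 0 := (hfit.1 v (n+1) hv1 (by omega) le_rfl).2 (by omega)
        have h2 : ¬ wc Wt v n < 0 := by
          rw [hfit.1 v n hv1 hvn (by omega)]; omega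
        have := hwcn v (by omega)
        omega
    · have hv' : v = n := by omega
      rw [hv', if_neg (by omega : ¬ σ (n+1) ≤ σ n), wc_zero Wt n n le_rfl]
  · rw [heq n le_rfl]
    have hYn1 : (Wt (n+1)).2 = h := hfit.2.2
    omega
  · funext u
    by_cases h1 : u = n+1
    · subst h1
      rw [if_pos rfl]
      have := hstep
      have h2 : Wt (n+1) = (1,-1) + Wt n := by
        rw [← this]; ring
      rw [h2]; ring
    · rw [if_neg h1]

lemma cross_char {n : ℕ} {σ : ℕ → ℕ} {W' : ℕ → ℤ × ℤ} (hn : 1 ≤ n)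
    (hinj : Set.InjOn σ (Set.Icc 1 (n+1))) (hbax : isBaxter (n+1) σ)
    (hdesc : σ (n+1) < σ n) (hW' : freeW n W') (hsig : signOK n W' σ) :
    ∃ i : ℤ, 0 ≤ i ∧ i ≤ (W' n).1 ∧
      ∀ v, 1 ≤ v → v ≤ n → wc W' v n < 0 → (-i ≤ wc W' v n ↔ σ (n+1) < σ v) := by
  classical
  set R : Finset ℕ := (Finset.Icc 1 n).filter (fun v => σ (n+1) < σ v ∧ σ v < σ n) with hR
  have hneg : ∀ v, 1 ≤ v → v ≤ n → wc W' v n < 0 → (v < n ∧ σ v < σ n) := by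
    intro v hv1 hv2 hz
    have hvn : v < n := by
      rcases Nat.lt_or_ge v n with hh | hh
      · exact hh
      · exfalso
        have : v = n := by omega
        rw [this, wc_zero W' n n le_rfl] at hz; omega
    exact ⟨hvn, (hsig v n hv1 hvn le_rfl).1 hz⟩
  by_cases hRne : R.Nonempty
  · set vals : Finset ℤ := R.image (fun v => wc W' v n) with hvals
    have hvne : vals.Nonempty := hRne.image _
    set m : ℤ := vals.min' hvne with hm
    obtain ⟨vstar, hvstarR, hvstarval⟩ := Finset.mem_image.mp (vals.min'_mem hvne)
    have hvstar : 1 ≤ vstar ∧ vstar ≤ n ∧ σ (n+1) < σ vstar ∧ σ vstar < σ n := by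
      have := Finset.mem_filter.mp hvstarR
      simp only [Finset.mem_Icc] at this
      exact ⟨this.1.1, this.1.2, this.2.1, this.2.2⟩
    have hvstarn : vstar < n := by
      rcases Nat.lt_or_ge vstar n with hh | hh
      · exact hh
      · exfalso; have : vstar = n := by omega
        rw [this] at hvstar; omega
    have hmneg : m < 0 := by
      rw [hm, ← hvstarval]
      exact (hsig vstar n hvstar.1 hvstarn le_rfl).2 hvstar.2.2.2
    refine ⟨-m, by omega, ?_, ?_⟩
    · have := (wc_bounds hW' hvstar.1 (by omega) le_rfl).1 (by omega)
      rw [hvstarval] at this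
      omega
    · intro v hv1 hv2 hz
      obtain ⟨hvn, hvsig⟩ := hneg v hv1 hv2 hz
      constructor
      · intro hle
        by_contra hcon
        have hne : σ v ≠ σ (n+1) := sig_ne hinj hv1 (by omega) (by omega) le_rfl (by omega)
        have hvlt : σ v < σ (n+1) := by omega
        -- v has the same (minimal) value as vstar
        have hmono1 : wc W' v n ≤ wc W' vstar n :=
          wc_mono_sigma hW' hsig hv1 hvstar.1 hv2 (by omega) le_rfl (by omega)
        have heqv : wc W' v n = wc W' vstar n := by omega
        have hvne' : v ≠ vstar := by
          intro hcontra; rw [hcontra] at hvlt; omega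
        obtain ⟨u, hu1, hu2, hu3, hu4, hu5, hu6⟩ :=
          joint_zero hW' n le_rfl v vstar hv1 hvstar.1 hv2 (by omega) heqv hz
        -- σ u ≤ σ v
        have hsigu : σ u ≤ σ v := by
          rcases Nat.eq_or_lt_of_le hu1 with he | hlt
          · rw [← he]
          · have : ¬ wc W' v u < 0 := by omega
            rw [hsig v u hv1 hlt (by omega)] at this
            omega
        have hvstaru : vstar < u := by
          rcases Nat.eq_or_lt_of_le hu2 with he | hlt
          · exfalso; rw [← he] at hsigu; omega
          · exact hlt
        have hwcv1 : wc W' vstar (u+1) < 0 := by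
          rw [wc_succ W' vstar u hu2, hu4, zstep_asc, hu6]; omega
        have hsig2 : σ vstar < σ (u+1) :=
          (hsig vstar (u+1) hvstar.1 (by omega) (by omega)).1 hwcv1
        exact hbax ⟨vstar, u, n+1, hvstar.1, hvstaru, by omega, le_rfl,
          Or.inr ⟨by omega, hvstar.2.2.1, hsig2⟩⟩
      · intro hgt
        have hvR : v ∈ R := by
          rw [hR]
          simp only [Finset.mem_filter, Finset.mem_Icc]
          exact ⟨⟨hv1, hv2⟩, hgt, hvsig⟩
        have : m ≤ wc W' v n := vals.min'_le _ (Finset.mem_image_of_mem _ hvR)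
        omega
  · refine ⟨0, le_rfl, (hW'.2.1 n hn le_rfl).1, ?_⟩
    intro v hv1 hv2 hz
    obtain ⟨hvn, hvsig⟩ := hneg v hv1 hv2 hz
    constructor
    · intro hle; omega
    · intro hgt
      exfalso
      exact hRne ⟨v, by
        rw [hR]; simp only [Finset.mem_filter, Finset.mem_Icc]
        exact ⟨⟨hv1, hv2⟩, hgt, hvsig⟩⟩

lemma desc_pair_ne {i b : ℤ} (hi : 0 ≤ i) : ((-i, b) : ℤ × ℤ) ≠ (1, -1) := by
  intro h
  have := congrArg Prod.fst h
  simp at this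
  omega

lemma exist_desc {n : ℕ} {σ : ℕ → ℕ} {μ : ℕ → ℤ} {h : ℤ} {W' : ℕ → ℤ × ℤ} (hn : 1 ≤ n)
    (hadm : admiss (n+1) σ μ h) (hdesc : σ (n+1) < σ n)
    (hW' : freeW n W')
    (hfit : datafit n W' σ (fun v => μ v - μ n) (h - μ n)) :
    ∃ We, freeW (n+1) We ∧ datafit (n+1) We σ μ h := by
  obtain ⟨hinj, hbax, hmu0, hbd, hmono, hconst⟩ := hadm
  have hbn := hbd n (by omega) (by omega) (by omega)
  obtain ⟨i, hi0, hiX, hichar⟩ := cross_char hn hinj hbax hdesc hW' hfit.1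
  set We : ℕ → ℤ × ℤ := fun u => if u = n+1 then W' n + (-i, μ n) else W' u with hWe
  have heq : ∀ u, u ≤ n → We u = W' u := fun u hu => by
    simp [hWe, show u ≠ n+1 by omega]
  have hstep : We (n+1) - We n = (-i, μ n) := by
    rw [heq n le_rfl]; simp [hWe]
  have hdne : ((-i, μ n) : ℤ × ℤ) ≠ (1, -1) := desc_pair_ne hi0
  have hYn : (W' n).2 = h - μ n := hfit.2.2
  have hwcn : ∀ v, v ≤ n → wc We v (n+1) = zstep (-i, μ n) (wc W' v n) := by
    intro v hv
    rw [wc_succ We v n hv, hstep, wc_ext _ v n le_rfl]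
  -- basic sign facts at time n
  have hz_nonneg : ∀ v, 1 ≤ v → v ≤ n → σ n ≤ σ v → 0 ≤ wc W' v n := by
    intro v hv1 hv2 hv3
    rcases Nat.eq_or_lt_of_le hv2 with he | hlt
    · rw [he, wc_zero W' n n le_rfl]
    · have hne : σ v ≠ σ n := sig_ne (hinj.mono (by
        intro x hx; simp only [Set.mem_Icc] at *; omega)) hv1 hv2 hn le_rfl (by omega)
      have := (hfit.1 v n hv1 hlt le_rfl)
      omega
  refine ⟨We, ⟨?_, ?_, ?_, ?_⟩, ?_, ?_, ?_⟩
  · intro t ht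
    simp only [Set.mem_Icc, not_and, not_le] at ht
    have h1 : t ≠ n + 1 := by omega
    simp only [hWe, if_neg h1]
    exact hW'.1 t (by simp only [Set.mem_Icc, not_and, not_le]; omega)
  · intro t ht1 ht2
    rcases Nat.lt_or_ge t (n+1) with hlt | hge
    · rw [heq t (by omega)]
      exact hW'.2.1 t ht1 (by omega)
    · have : t = n + 1 := by omega
      subst this
      simp only [hWe, if_pos rfl]
      constructor
      · rw [prod_add_fst]; omega
      · rw [prod_add_snd]; omega
  · intro t ht1 ht2
    rcases Nat.lt_or_ge (t+1) (n+1) with hlt | hge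
    · rw [heq (t+1) (by omega), heq t (by omega)]
      exact hW'.2.2.1 t ht1 (by omega)
    · have : t = n := by omega
      subst this
      rw [hstep]
      exact Or.inr ⟨by omega, by omega⟩
  · rw [heq 1 hn]; exact hW'.2.2.2
  · -- signOK (n+1)
    intro v t hv1 hvt ht
    rcases Nat.lt_or_ge t (n+1) with hlt | hge
    · rw [wc_ext _ v t (by omega)]
      exact hfit.1 v t hv1 hvt (by omega)
    · have : t = n + 1 := by omega
      subst this
      rw [hwcn v (by omega)]
      set z := wc W' v n with hz
      rcases Nat.lt_or_ge v n with hvn | hvn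
      · by_cases hc : σ v < σ n
        · have hzneg : z < 0 := (hfit.1 v n hv1 hvn le_rfl).2 hc
          have hch := hichar v hv1 (by omega) hzneg
          by_cases hcc : -i ≤ z
          · rw [zstep_desc_cross hdne (by omega) hzneg]
            constructor
            · intro hh; omega
            · intro hh
              have := hch.1 hcc
              omega
          · rw [zstep_desc_low hdne (by omega) (by omega)]
            have hvne : σ v ≠ σ (n+1) :=
              sig_ne hinj hv1 (by omega) (by omega) le_rfl (by omega)
            have : ¬ σ (n+1) < σ v := fun hcon => hcc (hch.2 hcon)
            constructor
            · intro _; omega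
            · intro _; omega
        · have hzpos : 0 ≤ z := hz_nonneg v hv1 (by omega) (by omega)
          rw [zstep_desc_nonneg hdne hzpos]
          constructor
          · intro hh; omega
          · intro hh; omega
      · have hv' : v = n := by omega
        subst hv'
        rw [wc_zero W' v v le_rfl] at hz
        rw [hz] at *
        rw [zstep_desc_nonneg hdne le_rfl]
        constructor
        · intro hh; simp at hh; omega
        · intro hh; omega
  · -- μ values at time n+1
    intro v hv1 hv2 hv3
    rcases Nat.lt_or_ge v (n+1) with hlt | hge
    · have hvne : σ v ≠ σ (n+1) := sig_ne hinj hv1 (by omega) (by omega) le_rfl (by omega)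
      rw [hwcn v (by omega)]
      set z := wc W' v n with hz
      rcases Nat.lt_or_ge v n with hvn | hvn
      · by_cases hc : σ v < σ n
        · have hzneg : z < 0 := (hfit.1 v n hv1 hvn le_rfl).2 hc
          have hch := hichar v hv1 (by omega) hzneg
          have hcc : -i ≤ z := hch.2 (by omega)
          rw [zstep_desc_cross hdne (by omega) hzneg]
          exact (hconst n v hv1 (by omega) le_rfl (by omega) (by omega)
            (Or.inl ⟨by omega, hc⟩)).symm
        · have hzpos : 0 ≤ z := hz_nonneg v hv1 (by omega) (by omega)
          rw [zstep_desc_nonneg hdne hzpos]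
          have hval := hfit.2.1 v hv1 (by omega) (by omega)
          dsimp only at hval
          show z + μ n = μ v
          omega
      · have hv' : v = n := by omega
        subst hv'
        rw [hz, wc_zero W' v v le_rfl, zstep_desc_nonneg hdne le_rfl]
        simp
    · have : v = n + 1 := by omega
      subst this
      rw [wc_zero We (n+1) (n+1) le_rfl, hmu0]
  · simp only [hWe, if_pos rfl, prod_add_snd]
    omega

lemma i_pinch {n : ℕ} {σ : ℕ → ℕ} {W' : ℕ → ℤ × ℤ} (hn : 1 ≤ n) (hW' : freeW n W')
    {i j : ℤ} (hi0 : 0 ≤ i) (hj0 : 0 ≤ j) (hiX : i ≤ (W' n).1) (hjX : j ≤ (W' n).1)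
    (hci : ∀ v, 1 ≤ v → v ≤ n → wc W' v n < 0 → (-i ≤ wc W' v n ↔ σ (n+1) < σ v))
    (hcj : ∀ v, 1 ≤ v → v ≤ n → wc W' v n < 0 → (-j ≤ wc W' v n ↔ σ (n+1) < σ v)) :
    i = j := by
  rcases lt_trichotomy i j with hlt | he | hlt
  · exfalso
    obtain ⟨v, hv1, hv2, hv3⟩ := values_attained hW' n hn le_rfl (i+1) (by omega) (by omega)
    have hs := (hcj v hv1 hv2 (by omega)).1 (by omega)
    have := (hci v hv1 hv2 (by omega)).2 hs
    omega
  · exact he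
  · exfalso
    obtain ⟨v, hv1, hv2, hv3⟩ := values_attained hW' n hn le_rfl (j+1) (by omega) (by omega)
    have hs := (hci v hv1 hv2 (by omega)).1 (by omega)
    have := (hcj v hv1 hv2 (by omega)).2 hs
    omega

lemma uniq_desc {n : ℕ} {σ : ℕ → ℕ} {μ : ℕ → ℤ} {h : ℤ} {Wt : ℕ → ℤ × ℤ} (hn : 1 ≤ n)
    (hadm : admiss (n+1) σ μ h) (hdesc : σ (n+1) < σ n)
    (hWt : freeW (n+1) Wt) (hfit : datafit (n+1) Wt σ μ h) :
    freeW n (fun t => if t = n+1 then 0 else Wt t) ∧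
    datafit n (fun t => if t = n+1 then 0 else Wt t) σ (fun v => μ v - μ n) (h - μ n) ∧
    ∃ i : ℤ, 0 ≤ i ∧
      Wt (n+1) = Wt n + (-i, μ n) ∧
      (∀ v, 1 ≤ v → v ≤ n → wc Wt v n < 0 → (-i ≤ wc Wt v n ↔ σ (n+1) < σ v)) := by
  obtain ⟨hinj, hbax, hmu0, hbd, hmono, hconst⟩ := hadm
  have hbn := hbd n (by omega) (by omega) (by omega)
  set T : ℕ → ℤ × ℤ := fun t => if t = n+1 then 0 else Wt t with hT
  have heq : ∀ u, u ≤ n → T u = Wt u := fun u hu => by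
    simp [hT, show u ≠ n+1 by omega]
  have hwcT : ∀ v s, s ≤ n → wc T v s = wc Wt v s :=
    fun v s hs => wc_congr T Wt v s (fun u hu => heq u (by omega))
  -- last step is a descent step
  have hstep : Wt (n+1) - Wt n ≠ (1,-1) ∧ (Wt (n+1) - Wt n).1 ≤ 0 ∧
      0 ≤ (Wt (n+1) - Wt n).2 := by
    rcases step_cases hWt (u := n) hn le_rfl with hd | hd
    · exfalso
      have h1 : wc Wt n (n+1) = -1 := by
        rw [wc_succ Wt n n le_rfl, wc_zero Wt n n le_rfl, hd, zstep_asc]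
        omega
      have h2 : σ n < σ (n+1) := (hfit.1 n (n+1) hn (by omega) le_rfl).1 (by omega)
      omega
    · exact hd
  obtain ⟨hne, hd1, hd2⟩ := hstep
  have hd2val : (Wt (n+1) - Wt n).2 = μ n := by
    have h1 : wc Wt n (n+1) = (Wt (n+1) - Wt n).2 := by
      rw [wc_succ Wt n n le_rfl, wc_zero Wt n n le_rfl, zstep_desc_nonneg hne le_rfl]
      ring
    have h2 := hfit.2.1 n hn (by omega) (by omega)
    omega
  have hwcn : ∀ v, v ≤ n → wc Wt v (n+1) = zstep (Wt (n+1) - Wt n) (wc Wt v n) :=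
    fun v hv => wc_succ Wt v n hv
  have hzge : ∀ v, 1 ≤ v → v ≤ n → σ n ≤ σ v → 0 ≤ wc Wt v n := by
    intro v hv1 hv2 hv3
    rcases Nat.eq_or_lt_of_le hv2 with he | hlt
    · rw [he, wc_zero Wt n n le_rfl]
    · have hne' : σ v ≠ σ n := sig_ne hinj hv1 (by omega) hn (by omega) (by omega)
      have := hfit.1 v n hv1 hlt (by omega)
      omega
  refine ⟨⟨?_, ?_, ?_, ?_⟩, ⟨?_, ?_, ?_⟩, ?_⟩
  · intro t ht
    by_cases h1 : t = n+1
    · simp [hT, h1]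
    · simp only [hT, if_neg h1]
      exact hWt.1 t (by simp only [Set.mem_Icc, not_and, not_le] at *; omega)
  · intro t ht1 ht2
    rw [heq t (by omega)]
    exact hWt.2.1 t ht1 (by omega)
  · intro t ht1 ht2
    rw [heq (t+1) (by omega), heq t (by omega)]
    exact hWt.2.2.1 t ht1 (by omega)
  · rw [heq 1 hn]; exact hWt.2.2.2
  · intro v t hv1 hvt ht
    rw [hwcT v t ht]
    exact hfit.1 v t hv1 hvt (by omega)
  · intro v hv1 hv2 hv3
    rw [hwcT v n le_rfl]
    dsimp only
    have hz := hzge v hv1 hv2 hv3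
    have hval := hfit.2.1 v hv1 (by omega) (by omega : σ (n+1) ≤ σ v)
    rw [hwcn v hv2, zstep_desc_nonneg hne hz] at hval
    omega
  · rw [heq n le_rfl]
    have hY : (Wt (n+1)).2 = (Wt n).2 + (Wt (n+1) - Wt n).2 := (coord_step Wt n).2
    have := hfit.2.2
    omega
  · refine ⟨-(Wt (n+1) - Wt n).1, by omega, ?_, ?_⟩
    · have : Wt (n+1) = Wt n + (Wt (n+1) - Wt n) := by ring
      rw [this]
      congr 1
      have h2 : (Wt (n+1) - Wt n) = ((Wt (n+1) - Wt n).1, (Wt (n+1) - Wt n).2) := rfl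
      rw [h2, hd2val]
      norm_num
    · intro v hv1 hv2 hz
      have hvn : v < n := by
        rcases Nat.lt_or_ge v n with hh | hh
        · exact hh
        · exfalso; have : v = n := by omega
          rw [this, wc_zero Wt n n le_rfl] at hz; omega
      have hvne : σ v ≠ σ (n+1) := sig_ne hinj hv1 (by omega) (by omega) le_rfl (by omega)
      have hsig := hfit.1 v (n+1) hv1 (by omega) le_rfl
      rw [hwcn v (by omega)] at hsig
      constructor
      · intro hle
        by_contra hcon
        rw [zstep_desc_cross hne (by omega) hz] at hsig
        have : σ v < σ (n+1) := hsig.1 (by omega)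
        omega
      · intro hgt
        by_contra hcon
        rw [zstep_desc_low hne (by omega) hd1] at hsig
        have : wc Wt v n - (Wt (n+1) - Wt n).1 < 0 := by omega
        have := hsig.1 this
        omega

theorem master : ∀ n : ℕ, 1 ≤ n → ∀ σ : ℕ → ℕ, ∀ μ : ℕ → ℤ, ∀ h : ℤ,
    admiss n σ μ h →
    (∃ W, freeW n W ∧ datafit n W σ μ h) ∧
    (∀ W W2, freeW n W → datafit n W σ μ h → freeW n W2 → datafit n W2 σ μ h → W = W2) := by
  intro n
  induction n with
  | zero => omega
  | succ m ih =>
    intro _ σ μ h hadm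
    rcases Nat.eq_zero_or_pos m with hm | hm
    · subst hm
      have hh0 : 0 ≤ h := by
        have h1 := hadm.2.2.2.1 1 le_rfl le_rfl le_rfl
        have h2 := hadm.2.2.1
        omega
      constructor
      · refine ⟨fun t => if t = 1 then ((0 : ℤ), h) else 0, ⟨?_, ?_, ?_, ?_⟩, ?_, ?_, ?_⟩
        · intro t ht
          simp only [Set.mem_Icc, not_and, not_le] at ht
          simp [show t ≠ 1 by omega]
        · intro t ht1 ht2
          have : t = 1 := by omega
          subst this
          simp
          omega
        · intro t ht1 ht2; omega
        · simp
        · intro v t hv1 hvt ht; omega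
        · intro v hv1 hv2 hv3
          have : v = 1 := by omega
          subst this
          rw [wc_zero _ 1 1 le_rfl, hadm.2.2.1]
        · simp
      · intro W W2 hW hfit hW2 hfit2
        funext t
        by_cases ht : t = 1
        · subst ht
          have e1 : W 1 = ((0:ℤ), h) :=
            Prod.ext_iff.mpr ⟨hW.2.2.2, hfit.2.2⟩
          have e2 : W2 1 = ((0:ℤ), h) :=
            Prod.ext_iff.mpr ⟨hW2.2.2.2, hfit2.2.2⟩
          rw [e1, e2]
        · rw [hW.1 t (by simp only [Set.mem_Icc, not_and, not_le]; omega),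
             hW2.1 t (by simp only [Set.mem_Icc, not_and, not_le]; omega)]
    · have hsig_ne : σ m ≠ σ (m+1) :=
        sig_ne hadm.1 hm (by omega) (by omega) le_rfl (by omega)
      by_cases hasc : σ m < σ (m+1)
      · have hadm' := admiss_asc hm hadm hasc
        obtain ⟨⟨W', hW', hfit'⟩, huniq'⟩ := ih hm σ _ _ hadm'
        constructor
        · obtain ⟨h1, h2⟩ := exist_asc hm hadm hasc hW' hfit'
          exact ⟨_, h1, h2⟩
        · intro W W2 hW hfit hW2 hfit2
          obtain ⟨hf1, hf2, hf3⟩ := uniq_asc hm hadm hasc hW hfit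
          obtain ⟨hg1, hg2, hg3⟩ := uniq_asc hm hadm hasc hW2 hfit2
          have hTT := huniq' _ _ hf1 hf2 hg1 hg2
          have hpt : ∀ u, u ≠ m+1 → W u = W2 u := by
            intro u hu
            have := congrFun hTT u
            simpa [if_neg hu] using this
          funext u
          by_cases hu : u = m+1
          · subst hu
            have e1 : W (m+1) = W m + (1,-1) := by
              have := congrFun hf3 (m+1); simpa using this
            have e2 : W2 (m+1) = W2 m + (1,-1) := by
              have := congrFun hg3 (m+1); simpa using this
            rw [e1, e2, hpt m (by omega)]
          · exact hpt u hu
      · have hdesc : σ (m+1) < σ m := by omega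
        have hadm' := admiss_desc hm hadm hdesc
        obtain ⟨⟨W', hW', hfit'⟩, huniq'⟩ := ih hm σ _ _ hadm'
        constructor
        · exact exist_desc hm hadm hdesc hW' hfit'
        · intro W W2 hW hfit hW2 hfit2
          obtain ⟨hf1, hf2, i1, hi10, hf3, hf4⟩ := uniq_desc hm hadm hdesc hW hfit
          obtain ⟨hg1, hg2, i2, hi20, hg3, hg4⟩ := uniq_desc hm hadm hdesc hW2 hfit2
          have hTT := huniq' _ _ hf1 hf2 hg1 hg2
          have hpt : ∀ u, u ≠ m+1 → W u = W2 u := by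
            intro u hu
            have := congrFun hTT u
            simpa [if_neg hu] using this
          have hWm : W m = W2 m := hpt m (by omega)
          -- bound i1, i2 by X m
          have hb1 : i1 ≤ (W m).1 := by
            have hq := (hW.2.1 (m+1) (by omega) le_rfl).1
            have := congrArg Prod.fst hf3
            rw [prod_add_fst] at this
            omega
          have hb2 : i2 ≤ (W m).1 := by
            have hq := (hW2.2.1 (m+1) (by omega) le_rfl).1
            have := congrArg Prod.fst hg3
            rw [prod_add_fst] at this
            rw [← hWm] at this
            omega
          -- transfer characterizations to the common truncation
          have hwcW : ∀ v, wc W v m = wc W2 v m := by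
            intro v
            exact wc_congr W W2 v m (fun u hu => hpt u (by omega))
          have hieq : i1 = i2 := by
            apply i_pinch hm hf1 hi10 hi20
            · simpa [show m ≠ m+1 by omega] using hb1
            · simpa [show m ≠ m+1 by omega] using hb2
            · intro v hv1 hv2 hz
              have he : wc (fun t => if t = m+1 then 0 else W t) v m = wc W v m :=
                wc_congr _ W v m (fun u hu => by simp [show u ≠ m+1 by omega])
              rw [he] at hz ⊢
              exact hf4 v hv1 hv2 hz
            · intro v hv1 hv2 hz
              have he : wc (fun t => if t = m+1 then 0 else W t) v m = wc W v m :=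
                wc_congr _ W v m (fun u hu => by simp [show u ≠ m+1 by omega])
              rw [he] at hz ⊢
              rw [hwcW v] at hz ⊢
              exact hg4 v hv1 hv2 hz
          funext u
          by_cases hu : u = m+1
          · subst hu
            rw [hf3, hg3, hWm, hieq]
          · exact hpt u hu

/-- The permutation induced by any walk with steps in the step set is Baxter. -/
lemma sig_baxter {n : ℕ} {W : ℕ → ℤ × ℤ} {σ : ℕ → ℕ}
    (hsteps : ∀ t, 1 ≤ t → t + 1 ≤ n → W (t + 1) - W t ∈ stepSet)
    (hsig : signOK n W σ) : isBaxter n σ := by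
  rintro ⟨i, j, k, h1, h2, h3, h4, hpat⟩
  have hjk : j + 1 ≤ k := h3
  have hd : W (j+1) - W j ∈ stepSet := hsteps j (by omega) (by omega)
  have hZjj1 : wc W j (j+1) = zstep (W (j+1) - W j) 0 := by
    rw [wc_succ W j j le_rfl, wc_zero W j j le_rfl]
  rcases hpat with ⟨hp1, hp2, hp3⟩ | ⟨hp1, hp2, hp3⟩
  · -- pattern 1 : σ(j+1) < σ i < σ k < σ j
    have hkj1 : j + 1 < k := by
      rcases Nat.eq_or_lt_of_le hjk with he | hlt
      · exfalso; rw [← he] at hp2 hp3; omega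
      · exact hlt
    have hZij1 : ¬ wc W i (j+1) < 0 := by
      rw [hsig i (j+1) h1 (by omega) (by omega)]; omega
    have hZik : wc W i k < 0 := (hsig i k h1 (by omega) h4).2 hp2
    have hZjk : ¬ wc W j k < 0 := by
      rw [hsig j k (by omega) h3 h4]; omega
    have hZjj1' : ¬ wc W j (j+1) < 0 := by
      rw [hsig j (j+1) (by omega) (by omega) (by omega)]; omega
    have hdne : W (j+1) - W j ≠ (1, -1) := by
      intro hcon
      rw [hZjj1, hcon, zstep_asc] at hZjj1'
      omega
    have hdd : (W (j+1) - W j).1 ≤ 0 ∧ 0 ≤ (W (j+1) - W j).2 := by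
      rcases hd with hc | hc
      · exact absurd hc hdne
      · exact hc
    have hZij : wc W i j < 0 := by
      by_contra hcon
      have hle : wc W j j ≤ wc W i j := by rw [wc_zero W j j le_rfl]; omega
      have := wc_le_prop W j i j le_rfl (by omega) hle k (by omega)
        (fun u hu hu2 => hsteps u (by omega) (by omega))
      omega
    have hZij1v : wc W i (j+1) = zstep (W (j+1) - W j) (wc W i j) :=
      wc_succ W i j (by omega)
    have hcross : (W (j+1) - W j).1 ≤ wc W i j := by
      by_contra hcon
      rw [zstep_desc_low hdne (by omega) hdd.1] at hZij1v
      omega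
    have heqq : wc W i (j+1) = wc W j (j+1) := by
      rw [hZij1v, zstep_desc_cross hdne hcross hZij, hZjj1,
        zstep_desc_nonneg hdne le_rfl]
      ring
    have := wc_eq_prop W i j (j+1) (by omega) (by omega) heqq k (by omega)
    omega
  · -- pattern 2 : σ j < σ k < σ i < σ(j+1)
    have hkj1 : j + 1 < k := by
      rcases Nat.eq_or_lt_of_le hjk with he | hlt
      · exfalso; rw [← he] at hp1 hp2; omega
      · exact hlt
    have hZij1 : wc W i (j+1) < 0 := (hsig i (j+1) h1 (by omega) (by omega)).2 (by omega)
    have hZik : ¬ wc W i k < 0 := by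
      rw [hsig i k h1 (by omega) h4]; omega
    have hZjk : wc W j k < 0 := (hsig j k (by omega) h3 h4).2 hp1
    have hZjj1' : wc W j (j+1) < 0 :=
      (hsig j (j+1) (by omega) (by omega) (by omega)).2 (by omega)
    have hdasc : W (j+1) - W j = (1, -1) := by
      by_cases hdne : W (j+1) - W j = (1,-1)
      · exact hdne
      · exfalso
        have hdd : (W (j+1) - W j).1 ≤ 0 ∧ 0 ≤ (W (j+1) - W j).2 := by
          rcases hd with hc | hc
          · exact absurd hc hdne
          · exact hc
        rw [hZjj1, zstep_desc_nonneg hdne le_rfl] at hZjj1'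
        omega
    have hZij : ¬ wc W i j < 0 := by
      by_contra hcon
      have hle : wc W i j ≤ wc W j j := by rw [wc_zero W j j le_rfl]; omega
      have := wc_le_prop W i j j (by omega) le_rfl hle k (by omega)
        (fun u hu hu2 => hsteps u (by omega) (by omega))
      omega
    have hZij1v : wc W i (j+1) = wc W i j - 1 := by
      rw [wc_succ W i j (by omega), hdasc, zstep_asc]
    have heqq : wc W i (j+1) = wc W j (j+1) := by
      rw [hZij1v, hZjj1, hdasc, zstep_asc]
      omega
    have := wc_eq_prop W i j (j+1) (by omega) (by omega) heqq k (by omega)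
    omega

lemma perm_card {n : ℕ} {f : ℕ → ℕ} (hf : isPermOn n f) {i : ℕ} (hi : i ∈ Set.Icc 1 n) :
    ((Finset.Icc 1 n).filter (fun j => f j ≤ f i)).card = f i := by
  classical
  have hfi : f i ∈ Set.Icc 1 n := hf.1 hi
  rw [Set.mem_Icc] at hfi
  have hcard : ((Finset.Icc 1 n).filter (fun j => f j ≤ f i)).card
      = (Finset.Icc 1 (f i)).card := by
    apply Finset.card_bij (fun j _ => f j)
    · intro a ha
      simp only [Finset.mem_filter, Finset.mem_Icc] at ha
      have := hf.1 (Set.mem_Icc.mpr ⟨ha.1.1, ha.1.2⟩)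
      rw [Set.mem_Icc] at this
      simp only [Finset.mem_Icc]
      exact ⟨this.1, ha.2⟩
    · intro a ha b hb hab
      simp only [Finset.mem_filter, Finset.mem_Icc] at ha hb
      exact hf.2.1 (Set.mem_Icc.mpr ⟨ha.1.1, ha.1.2⟩) (Set.mem_Icc.mpr ⟨hb.1.1, hb.1.2⟩) hab
    · intro b hb
      simp only [Finset.mem_Icc] at hb
      obtain ⟨j, hj, hjb⟩ := hf.2.2 (Set.mem_Icc.mpr ⟨hb.1, by omega⟩)
      rw [Set.mem_Icc] at hj
      refine ⟨j, ?_, hjb⟩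
      simp only [Finset.mem_filter, Finset.mem_Icc]
      exact ⟨⟨hj.1, hj.2⟩, by omega⟩
  rw [hcard, Nat.card_Icc]
  omega

lemma cp_unique {n : ℕ} {σ τ : ℕ → ℕ} (hσ : isPermOn n σ) (hτ : isPermOn n τ)
    (hiff : ∀ i ∈ Set.Icc 1 n, ∀ j ∈ Set.Icc 1 n, (σ i ≤ σ j ↔ τ i ≤ τ j)) :
    ∀ i ∈ Set.Icc 1 n, σ i = τ i := by
  classical
  intro i hi
  have h1 := perm_card hσ hi
  have h2 := perm_card hτ hi
  have h3 : (Finset.Icc 1 n).filter (fun j => σ j ≤ σ i)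
      = (Finset.Icc 1 n).filter (fun j => τ j ≤ τ i) := by
    apply Finset.filter_congr
    intro j hj
    simp only [Finset.mem_Icc] at hj
    exact hiff j (Set.mem_Icc.mpr hj) i hi
  rw [← h1, ← h2, h3]

lemma signOK_of_isCP {n : ℕ} {W : ℕ → ℤ × ℤ} {σ : ℕ → ℕ}
    (h : isCP n (wc W) σ) : signOK n W σ := by
  intro v t hv1 hvt ht
  have hv : v ∈ Set.Icc 1 n := Set.mem_Icc.mpr ⟨hv1, by omega⟩
  have htI : t ∈ Set.Icc 1 n := Set.mem_Icc.mpr ⟨by omega, ht⟩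
  have hiff1 := h.2 v hv t htI
  have hiff2 := h.2 t htI v hv
  constructor
  · intro hz
    have hle : σ v ≤ σ t := hiff1.mpr (Or.inr (Or.inl ⟨hvt, hz⟩))
    have hnle : ¬ σ t ≤ σ v := by
      intro hc
      rcases hiff2.mp hc with he | ⟨hlt, _⟩ | ⟨hlt, hge⟩
      · omega
      · omega
      · omega
    omega
  · intro hlt2
    by_contra hz
    have : σ t ≤ σ v := hiff2.mpr (Or.inr (Or.inr ⟨hvt, by omega⟩))
    omega

lemma isCP_of_signOK {n : ℕ} {W : ℕ → ℤ × ℤ} {σ : ℕ → ℕ}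
    (hperm : isPermOn n σ) (hsig : signOK n W σ) : isCP n (wc W) σ := by
  refine ⟨hperm, ?_⟩
  intro i hi j hj
  rw [Set.mem_Icc] at hi hj
  rcases Nat.lt_trichotomy i j with hlt | he | hlt
  · have hne : σ i ≠ σ j := sig_ne hperm.injOn hi.1 hi.2 hj.1 hj.2 (by omega)
    have hs := hsig i j hi.1 hlt hj.2
    constructor
    · intro hle
      exact Or.inr (Or.inl ⟨hlt, hs.mpr (by omega)⟩)
    · rintro (he | ⟨_, hz⟩ | ⟨hgt, _⟩)
      · omega
      · have := hs.mp hz; omega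
      · omega
  · subst he
    constructor
    · intro _; exact Or.inl rfl
    · intro _; exact le_rfl
  · have hne : σ i ≠ σ j := sig_ne hperm.injOn hi.1 hi.2 hj.1 hj.2 (by omega)
    have hs := hsig j i hj.1 hlt hi.2
    constructor
    · intro hle
      refine Or.inr (Or.inr ⟨hlt, ?_⟩)
      by_contra hc
      have := hs.mp (by omega)
      omega
    · rintro (he | ⟨hlt2, _⟩ | ⟨_, hge⟩)
      · omega
      · omega
      · have : ¬ σ j < σ i := fun hc => by
          have := hs.mpr hc; omega
        omega

lemma tandem_split {n : ℕ} {W : ℕ → ℤ × ℤ} (hW : W ∈ tandemSet n) :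
    freeW n W ∧ (W n).2 = 0 :=
  ⟨⟨hW.1, hW.2.1, hW.2.2.1, hW.2.2.2.1⟩, hW.2.2.2.2⟩

lemma admiss_zero {n : ℕ} {σ : ℕ → ℕ} (hinj : Set.InjOn σ (Set.Icc 1 n))
    (hbax : isBaxter n σ) : admiss n σ (fun _ => 0) 0 :=
  ⟨hinj, hbax, rfl, fun _ _ _ _ => ⟨le_rfl, le_rfl⟩,
    fun _ _ _ _ _ _ _ _ => le_rfl, fun _ _ _ _ _ _ _ _ => rfl⟩

/-- For every `n ≥ 1`, the map sending a tandem walk `W ∈ 𝒲_n` to the permutation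
`CP(WC(W))` is a bijection from `𝒲_n` onto the set of Baxter permutations of size `n`.
(Here `F` is any map that realizes `W ↦ CP(WC(W))` on `𝒲_n`, `CP(WC(W))` being uniquely
characterized by the property `isCP`.) -/
theorem baxter_bijection (n : ℕ) (hn : 0 < n)
    (F : (ℕ → ℤ × ℤ) → (ℕ → ℕ))
    (hF : ∀ W ∈ tandemSet n,
      (∀ t, t ∉ Set.Icc 1 n → F W t = 0) ∧ isCP n (wc W) (F W)) :
    Set.BijOn F (tandemSet n) (baxterSet n) := by
  have hn1 : 1 ≤ n := hn
  have hmaps : ∀ W ∈ tandemSet n, F W ∈ baxterSet n := by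
    intro W hW
    obtain ⟨hfree, hY⟩ := tandem_split hW
    obtain ⟨hvan, hcp⟩ := hF W hW
    exact ⟨hvan, hcp.1, sig_baxter hfree.2.2.1 (signOK_of_isCP hcp)⟩
  have hdata : ∀ W ∈ tandemSet n, freeW n W ∧ datafit n W (F W) (fun _ => 0) 0 := by
    intro W hW
    obtain ⟨hfree, hY⟩ := tandem_split hW
    obtain ⟨hvan, hcp⟩ := hF W hW
    have hsig := signOK_of_isCP hcp
    refine ⟨hfree, hsig, ?_, hY⟩
    intro v hv1 hv2 hv3
    rcases Nat.eq_or_lt_of_le hv2 with he | hlt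
    · rw [he]
      exact wc_zero W n n le_rfl
    · have hne : F W v ≠ F W n := sig_ne hcp.1.injOn hv1 hv2 hn1 le_rfl (by omega)
      have h1 : ¬ wc W v n < 0 := by rw [hsig v n hv1 hlt le_rfl]; omega
      have h2 := (wc_bounds hfree hv1 hv2 le_rfl).2 (by omega)
      show wc W v n = 0
      omega
  refine ⟨hmaps, ?_, ?_⟩
  · intro W hW W2 hW2 heq
    have h1 := hdata W hW
    have h2 := hdata W2 hW2
    rw [← heq] at h2
    have hadm : admiss n (F W) (fun _ => 0) 0 :=
      admiss_zero (hF W hW).2.1.injOn (hmaps W hW).2.2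
    exact (master n hn1 (F W) _ 0 hadm).2 W W2 h1.1 h1.2 h2.1 h2.2
  · intro σ hσ
    obtain ⟨hvan, hperm, hbax⟩ := hσ
    have hadm : admiss n σ (fun _ => 0) 0 := admiss_zero hperm.injOn hbax
    obtain ⟨W, hfree, hfit⟩ := (master n hn1 σ _ 0 hadm).1
    have hWt : W ∈ tandemSet n :=
      ⟨hfree.1, hfree.2.1, hfree.2.2.1, hfree.2.2.2, hfit.2.2⟩
    refine ⟨W, hWt, ?_⟩
    obtain ⟨hvan2, hcp⟩ := hF W hWt
    have hcp2 : isCP n (wc W) σ := isCP_of_signOK hperm hfit.1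
    have hiff : ∀ i ∈ Set.Icc 1 n, ∀ j ∈ Set.Icc 1 n, (F W i ≤ F W j ↔ σ i ≤ σ j) :=
      fun i hi j hj => (hcp.2 i hi j hj).trans (hcp2.2 i hi j hj).symm
    have heqp := cp_unique hcp.1 hperm hiff
    funext t
    by_cases ht : t ∈ Set.Icc 1 n
    · exact heqp t ht
    · rw [hvan2 t ht, hvan t ht]
end

section
/- For every positive integer n and every tandem walk W ∈ 𝒲_n, the permutation CP(WC(W)) is a Baxter permutation of size n. -/
lemma wc_self (W : ℕ → ℤ × ℤ) (t : ℕ) : wc W t t = 0 := by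
  cases t with
  | zero => rfl
  | succ s => simp [wc]

lemma wc_coalesce (W : ℕ → ℤ × ℤ) (a b m : ℕ) (ha : a ≤ m) (hb : b ≤ m)
    (h : wc W a m = wc W b m) : ∀ s, m ≤ s → wc W a s = wc W b s := by
  intro s hs
  induction s with
  | zero =>
    have : m = 0 := by omega
    subst this; exact h
  | succ s ih =>
    rcases Nat.eq_or_lt_of_le hs with he | hlt
    · rw [← he]; exact h
    · have hms : m ≤ s := by omega
      rw [wc_succ W a s (by omega), wc_succ W b s (by omega), ih hms]

lemma sigma_lt_of (n : ℕ) (W : ℕ → ℤ × ℤ) (σ : ℕ → ℕ)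
    (hσ : ∀ i ∈ Set.Icc 1 n, ∀ j ∈ Set.Icc 1 n, (σ i ≤ σ j ↔ leZ (wc W) i j))
    {a b : ℕ} (ha : a ∈ Set.Icc 1 n) (hb : b ∈ Set.Icc 1 n) (hab : a < b) :
    (σ a < σ b → wc W a b < 0) ∧ (σ b < σ a → 0 ≤ wc W a b) := by
  constructor
  · intro hlt
    have := (hσ a ha b hb).1 hlt.le
    rcases this with h | ⟨_, h⟩ | ⟨h, _⟩ <;> omega
  · intro hlt
    have := (hσ b hb a ha).1 hlt.le
    rcases this with h | ⟨h, _⟩ | ⟨_, h⟩ <;> omega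

/-- For every `n ≥ 1` and every tandem walk `W ∈ 𝒲_n`, the permutation `CP(WC(W))`
(uniquely characterized by the property `isCP`) is a Baxter permutation of size `n`. -/
theorem cp_wc_isBaxter (n : ℕ) (hn : 0 < n)
    (W : ℕ → ℤ × ℤ) (hW : isTandem n W)
    (σ : ℕ → ℕ) (hσ : isCP n (wc W) σ) :
    isBaxter n σ := by
  rintro ⟨i, j, k, h1i, hij, hjk, hkn, hcase⟩
  obtain ⟨_, hord⟩ := hσ
  have hi : i ∈ Set.Icc 1 n := by simp [Set.mem_Icc]; omega
  have hj : j ∈ Set.Icc 1 n := by simp [Set.mem_Icc]; omega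
  have hk : k ∈ Set.Icc 1 n := by simp [Set.mem_Icc]; omega
  have hj1 : j + 1 ∈ Set.Icc 1 n := by simp [Set.mem_Icc]; omega
  set d : ℤ × ℤ := W (j + 1) - W j with hd
  have hik := sigma_lt_of n W σ hord hi hk (by omega)
  have hij' := sigma_lt_of n W σ hord hi hj hij
  have hij1 := sigma_lt_of n W σ hord hi hj1 (by omega)
  have hjk' := sigma_lt_of n W σ hord hj hk hjk
  have eqi : wc W i (j + 1) = zstep d (wc W i j) := wc_succ W i j (by omega)
  have eqj : wc W j (j + 1) = zstep d (wc W j j) := wc_succ W j j (le_refl j)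
  rw [wc_self] at eqj
  rcases hcase with ⟨ha, hb, hc⟩ | ⟨ha, hb, hc⟩
  · -- σ(j+1) < σ i < σ k < σ j
    have hZij : wc W i j < 0 := hij'.1 (by omega)
    have hZij1 : 0 ≤ wc W i (j + 1) := hij1.2 ha
    have hZik : wc W i k < 0 := hik.1 hb
    have hZjk : 0 ≤ wc W j k := hjk'.2 hc
    have hdne : d ≠ (1, -1) := by
      intro hne
      rw [eqi, zstep, if_pos hne] at hZij1
      omega
    have hcoal : wc W i (j + 1) = wc W j (j + 1) := by
      rw [eqi, eqj, zstep, zstep, if_neg hdne, if_neg hdne,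
        if_pos (le_refl (0 : ℤ)), if_neg (by omega : ¬ (0 : ℤ) ≤ wc W i j)]
      by_cases hlt : wc W i j < d.1
      · exfalso
        rw [eqi, zstep, if_neg hdne, if_neg (by omega : ¬ (0 : ℤ) ≤ wc W i j),
          if_pos hlt] at hZij1
        omega
      · rw [if_neg hlt]; ring
    have := wc_coalesce W i j (j + 1) (by omega) (by omega) hcoal k (by omega)
    omega
  · -- σ j < σ k < σ i < σ(j+1)
    have hZij : 0 ≤ wc W i j := hij'.2 (by omega)
    have hZij1 : wc W i (j + 1) < 0 := hij1.1 hc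
    have hZik : 0 ≤ wc W i k := hik.2 hb
    have hZjk : wc W j k < 0 := hjk'.1 ha
    have hstep : d ∈ stepSet := hW.2.1 j (by omega) (by omega)
    have hZjj1 : wc W j (j + 1) < 0 := (sigma_lt_of n W σ hord hj hj1 (by omega)).1 (by omega)
    have hdeq : d = (1, -1) := by
      by_contra hne
      rw [eqj, zstep, if_neg hne, if_pos (le_refl (0 : ℤ))] at hZjj1
      rcases hstep with h | ⟨_, h⟩
      · exact hne h
      · omega
    have hZij0 : wc W i j = 0 := by
      rw [eqi, zstep, if_pos hdeq] at hZij1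
      omega
    have hcoal : wc W i (j + 1) = wc W j (j + 1) := by
      rw [eqi, eqj, zstep, zstep, if_pos hdeq, if_pos hdeq, hZij0]
    have := wc_coalesce W i j (j + 1) (by omega) (by omega) hcoal k (by omega)
    omega
end

section
/- Let I be a (finite or infinite) integer interval and let W be a walk indexed by I with increments in A. Then Z = WC(W) is a coalescent-walk process on I; in particular, for all t ≤ t' in I and all k ∈ I with k ≥ t', if Z^{(t)}_k ≥ Z^{(t')}_k then Z^{(t)}_{k'} ≥ Z^{(t')}_{k'} for every k' ∈ I with k' ≥ k, and if Z^{(t)}_k ≤ Z^{(t')}_k then Z^{(t)}_{k'} ≤ Z^{(t')}_{k'} for every k' ∈ I with k' ≥ k. -/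
/-- `W` is a walk on the integer interval `I` with increments in `A`. -/
def isWalkOn (I : Set ℤ) (W : ℤ → ℤ × ℤ) : Prop :=
  ∀ ℓ, ℓ ∈ I → ℓ + 1 ∈ I → W (ℓ + 1) - W ℓ ∈ stepSet

/-- `Z` satisfies the defining recurrence of the coalescent-walk process `WC(W)` driven by `W`
on the interval `I`: `Z t s` is the value `Z^{(t)}_s` of the trajectory started at time `t`. -/
def isWCOn (I : Set ℤ) (W : ℤ → ℤ × ℤ) (Z : ℤ → ℤ → ℤ) : Prop :=
  (∀ t ∈ I, Z t t = 0) ∧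
  ∀ t ∈ I, ∀ ℓ ∈ I, t ≤ ℓ → ℓ + 1 ∈ I →
    Z t (ℓ + 1) = zstep (W (ℓ + 1) - W ℓ) (Z t ℓ)

/-- `Z` is a coalescent-walk process on the interval `I`. -/
def isCoalescentOn (I : Set ℤ) (Z : ℤ → ℤ → ℤ) : Prop :=
  (∀ t ∈ I, Z t t = 0) ∧
  ∀ t ∈ I, ∀ t' ∈ I, t ≤ t' → ∀ k ∈ I, t' ≤ k →
    ((Z t' k ≤ Z t k → ∀ k' ∈ I, k ≤ k' → Z t' k' ≤ Z t k') ∧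
     (Z t k ≤ Z t' k → ∀ k' ∈ I, k ≤ k' → Z t k' ≤ Z t' k'))

/-
Each step `zstep d` with `d ∈ A` is a monotone map of `ℤ` (on the negative half-line it is
`z ↦ z - d.1` below `d.1` and the constant `d.2 ≥ 0` from `d.1` on), and two trajectories are
driven by the same sequence of steps from the later starting time on, so a weak order between
them at one time is preserved at every later time.
-/

theorem zstep_monotone {d : ℤ × ℤ} (hd : d ∈ stepSet) : Monotone (zstep d) := by
  intro z₁ z₂ h
  rcases hd with rfl | ⟨hd₁, hd₂⟩
  · simp only [zstep, if_true]
    omega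
  · unfold zstep
    split_ifs <;> omega

theorem Set.OrdConnected.le_of_monotone_recursion {α : Type*} [Preorder α] {I : Set ℤ}
    (hI : I.OrdConnected) {f : ℤ → α → α} (hf : ∀ ℓ ∈ I, ℓ + 1 ∈ I → Monotone (f ℓ))
    {a b : ℤ → α} {k : ℤ} (hk : k ∈ I)
    (ha : ∀ ℓ ∈ I, k ≤ ℓ → ℓ + 1 ∈ I → a (ℓ + 1) = f ℓ (a ℓ))
    (hb : ∀ ℓ ∈ I, k ≤ ℓ → ℓ + 1 ∈ I → b (ℓ + 1) = f ℓ (b ℓ))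
    (hab : a k ≤ b k) : ∀ k' ∈ I, k ≤ k' → a k' ≤ b k' := by
  intro k' hk' hkk'
  induction k', hkk' using Int.leInduction with
  | base => exact hab
  | succ ℓ hkℓ ih =>
    have hℓ : ℓ ∈ I := hI.out hk hk' ⟨hkℓ, by omega⟩
    rw [ha ℓ hℓ hkℓ hk', hb ℓ hℓ hkℓ hk']
    exact hf ℓ hℓ hk' (ih hℓ)

theorem isWCOn.le_of_le {I : Set ℤ} (hI : I.OrdConnected) {W : ℤ → ℤ × ℤ} (hW : isWalkOn I W)
    {Z : ℤ → ℤ → ℤ} (hZ : isWCOn I W Z) {t t' k : ℤ} (ht : t ∈ I) (ht' : t' ∈ I) (hk : k ∈ I)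
    (htk : t ≤ k) (ht'k : t' ≤ k) (hle : Z t k ≤ Z t' k) :
    ∀ k' ∈ I, k ≤ k' → Z t k' ≤ Z t' k' :=
  hI.le_of_monotone_recursion (fun ℓ hℓ hℓ₁ => zstep_monotone (hW ℓ hℓ hℓ₁)) hk
    (fun ℓ hℓ hkℓ hℓ₁ => hZ.2 t ht ℓ hℓ (htk.trans hkℓ) hℓ₁)
    (fun ℓ hℓ hkℓ hℓ₁ => hZ.2 t' ht' ℓ hℓ (ht'k.trans hkℓ) hℓ₁) hle

/-- If `W` is a walk with increments in `A` on a (finite or infinite) integer interval `I`,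
then `Z = WC(W)` is a coalescent-walk process on `I`: trajectories, once weakly ordered at some
time, stay in that order at all later times. -/
theorem wc_isCoalescent (I : Set ℤ) (hI : I.OrdConnected)
    (W : ℤ → ℤ × ℤ) (hW : isWalkOn I W)
    (Z : ℤ → ℤ → ℤ) (hZ : isWCOn I W Z) :
    isCoalescentOn I Z :=
  ⟨hZ.1, fun _t ht _t' ht' htt' _k hk ht'k =>
    ⟨hZ.le_of_le hI hW ht' ht hk ht'k (htt'.trans ht'k),
     hZ.le_of_le hI hW ht ht' hk (htt'.trans ht'k) ht'k⟩⟩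
end

section
/- Let I be a (finite or infinite) integer interval, let W be a walk indexed by I with increments in A, and let Z = WC(W). Let t ≤ t' in I and suppose there exists k ∈ I with k ≥ t' and Z^{(t)}_k = Z^{(t')}_k; let ℓ be the smallest such k (so that (ℓ, Z^{(t)}_ℓ) is the coalescent point of the trajectories Z^{(t)} and Z^{(t')}). Then Z^{(t)}_ℓ ≥ 0. -/
/-- Coalescent points of the coalescent-walk process `WC(W)` driven by a walk `W` with
increments in `A` have non-negative ordinate: if `ℓ` is the first time `≥ max(t,t')` at which
the trajectories started at `t ≤ t'` agree, then the common value `Z^{(t)}_ℓ` is `≥ 0`. -/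
theorem coalescent_point_nonneg (I : Set ℤ) (hI : I.OrdConnected)
    (W : ℤ → ℤ × ℤ) (hW : isWalkOn I W)
    (Z : ℤ → ℤ → ℤ) (hZ : isWCOn I W Z)
    (t t' : ℤ) (ht : t ∈ I) (ht' : t' ∈ I) (htt' : t ≤ t')
    (ℓ : ℤ) (hℓI : ℓ ∈ I) (hℓt' : t' ≤ ℓ) (heq : Z t ℓ = Z t' ℓ)
    (hmin : ∀ k ∈ I, t' ≤ k → Z t k = Z t' k → ℓ ≤ k) :
    0 ≤ Z t ℓ := by
  by_contra hneg
  push_neg at hneg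
  obtain ⟨hZ0, hZrec⟩ := hZ
  have ht'ℓ : t' < ℓ := by
    rcases lt_or_eq_of_le hℓt' with h | h
    · exact h
    · exfalso; rw [← h] at heq hneg; rw [hZ0 t' ht'] at heq; omega
  have hmem : ℓ - 1 ∈ I := hI.out ht' hℓI ⟨by omega, by omega⟩
  have h1 : ℓ - 1 + 1 = ℓ := by ring
  have hℓI' : ℓ - 1 + 1 ∈ I := by rw [h1]; exact hℓI
  have hrt : Z t ℓ = zstep (W ℓ - W (ℓ - 1)) (Z t (ℓ - 1)) := by
    have := hZrec t ht (ℓ - 1) hmem (by omega) hℓI'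
    rwa [h1] at this
  have hrt' : Z t' ℓ = zstep (W ℓ - W (ℓ - 1)) (Z t' (ℓ - 1)) := by
    have := hZrec t' ht' (ℓ - 1) hmem (by omega) hℓI'
    rwa [h1] at this
  have hd : W ℓ - W (ℓ - 1) ∈ stepSet := by
    have := hW (ℓ - 1) hmem hℓI'
    rwa [h1] at this
  set d := W ℓ - W (ℓ - 1) with hdd
  have hab : Z t (ℓ - 1) = Z t' (ℓ - 1) := by
    have h : zstep d (Z t (ℓ - 1)) = zstep d (Z t' (ℓ - 1)) := by
      rw [← hrt, ← hrt', heq]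
    have hneg' : zstep d (Z t (ℓ - 1)) < 0 := by rw [← hrt]; exact hneg
    by_cases hde : d = (1, -1)
    · simp only [zstep, if_pos hde] at h; omega
    · obtain ⟨hd1, hd2⟩ : d.1 ≤ 0 ∧ 0 ≤ d.2 := hd.resolve_left hde
      simp only [zstep, if_neg hde] at h hneg'
      split_ifs at h hneg' <;> omega
  have := hmin (ℓ - 1) hmem (by omega) hab
  omega
end

section
/- Let n ≥ 1, let W = (X_t, Y_t)_{1≤t≤n} ∈ 𝒲_n be a tandem walk, and let Z = WC(W). Then for all 1 ≤ t ≤ k ≤ n one has −X_k ≤ Z^{(t)}_k ≤ Y_k. -/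
/-- Deterministic bound on the trajectories of the coalescent-walk process of a tandem walk:
for `W = (X, Y) ∈ 𝒲_n` and `Z = WC(W)`, one has `-X_k ≤ Z^{(t)}_k ≤ Y_k` for all
`1 ≤ t ≤ k ≤ n`. -/
theorem wc_between (n : ℕ) (hn : 0 < n) (W : ℕ → ℤ × ℤ) (hW : isTandem n W) :
    ∀ t k, 1 ≤ t → t ≤ k → k ≤ n →
      -(W k).1 ≤ wc W t k ∧ wc W t k ≤ (W k).2 := by
  obtain ⟨hquad, hstep, -, -⟩ := hW
  intro t k ht htk hkn
  induction k, htk using Nat.le_induction with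
  | base =>
    have hz : wc W t t = 0 := by
      cases t with
      | zero => omega
      | succ s => simp [wc]
    rw [hz]
    obtain ⟨h1, h2⟩ := hquad t ht hkn
    exact ⟨by linarith, h2⟩
  | succ k hk ih =>
    obtain ⟨hb1, hb2⟩ := ih (by omega)
    have hd := hstep k (by omega) hkn
    obtain ⟨hq1, hq2⟩ := hquad (k + 1) (by omega) hkn
    obtain ⟨hqk1, hqk2⟩ := hquad k (by omega) (by omega)
    have hne : ¬ (k + 1 ≤ t) := by omega
    rw [wc, if_neg hne]
    set z := wc W t k with hzdef
    rcases hd with h | ⟨h1, h2⟩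
    · have hX : (W (k+1)).1 = (W k).1 + 1 := by
        have := congrArg Prod.fst h; simp at this; linarith
      have hY : (W (k+1)).2 = (W k).2 - 1 := by
        have := congrArg Prod.snd h; simp at this; linarith
      rw [zstep, if_pos h]
      constructor <;> [rw [hX]; rw [hY]] <;> linarith
    · have hX : (W (k+1) - W k).1 = (W (k+1)).1 - (W k).1 := rfl
      have hY : (W (k+1) - W k).2 = (W (k+1)).2 - (W k).2 := rfl
      rw [hX] at h1; rw [hY] at h2
      rw [zstep]
      by_cases hd11 : W (k+1) - W k = (1, -1)
      · exfalso
        have := congrArg Prod.fst hd11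
        simp [hX] at this
        omega
      rw [if_neg hd11]
      by_cases h0 : 0 ≤ z
      · rw [if_pos h0, hY]
        exact ⟨by linarith, by linarith⟩
      · rw [if_neg h0]
        by_cases hlt : z < (W (k+1) - W k).1
        · rw [if_pos hlt, hX]
          constructor
          · linarith
          · push_neg at h0
            rw [hX] at hlt
            linarith
        · rw [if_neg hlt, hY]
          exact ⟨by linarith, by linarith⟩
end
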